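/- arXiv:0909.1594 — 2 statements merged into one kernel-verified Lean document; each statement's English description precedes it below -/
import Mathlib

section
/- A token (q_n) is uniquely determined by the sequence of derivatives q_n'(0): if (q_n) and (r_n) are tokens with q_n'(0) = r_n'(0) for all n ≥ 1, then q_n = r_n for all n. -/
/-!
Substituting `X + C x` turns the binomial identity into
`q n (X + x) = ∑ k, q (n - k) x • q k`; differentiating in `X` and evaluating at `0` gives
`q n' = ∑ k, q k'(0) • q (n - k)`. Its term `k = 0` vanishes, so by strong induction `q n'` is
determined by the numbers `q k'(0)`, and `q n` itself then by `q n(0)`, which is `0` for `n > 0`.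
-/

open Polynomial Finset

structure IsBinomialType {R : Type*} [CommRing R] (q : ℕ → R[X]) : Prop where
  zero_eq_one : q 0 = 1
  eval_add_eq_sum : ∀ n (x y : R), (q n).eval (x + y) =
    ∑ k ∈ range (n + 1), (q k).eval y * (q (n - k)).eval x

namespace IsBinomialType

variable {R : Type*} [CommRing R] {q : ℕ → R[X]}

theorem eval_zero_of_pos (hq : IsBinomialType q) {n : ℕ} (hn : 0 < n) : (q n).eval 0 = 0 := by
  induction n using Nat.strong_induction_on with
  | _ n ih =>
    obtain ⟨m, rfl⟩ := Nat.exists_eq_add_one_of_ne_zero hn.ne'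
    have h := hq.eval_add_eq_sum (m + 1) 0 0
    have hmid : ∀ k ∈ range m, (q (k + 1)).eval 0 * (q (m + 1 - (k + 1))).eval 0 = 0 :=
      fun k hk => by rw [ih (k + 1) (by simpa using hk) k.succ_pos, zero_mul]
    rw [add_zero, sum_range_succ, sum_range_succ', sum_congr rfl hmid, sum_const_zero] at h
    simp only [zero_add, Nat.sub_zero, Nat.sub_self, hq.zero_eq_one, eval_one, one_mul,
      mul_one] at h
    linear_combination -h

theorem comp_X_add_C [IsDomain R] [Infinite R] (hq : IsBinomialType q) (n : ℕ) (x : R) :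
    (q n).comp (X + C x) = ∑ k ∈ range (n + 1), C ((q (n - k)).eval x) * q k :=
  Polynomial.funext fun y => by
    rw [eval_comp, eval_add, eval_X, eval_C, add_comm, hq.eval_add_eq_sum, eval_finsetSum]
    exact sum_congr rfl fun k _ => by rw [eval_mul, eval_C, mul_comm]

theorem derivative_eq_sum [IsDomain R] [Infinite R] (hq : IsBinomialType q) (n : ℕ) :
    derivative (q n) =
      ∑ k ∈ range (n + 1), C ((derivative (q k)).eval 0) * q (n - k) := by
  refine Polynomial.funext fun x => ?_
  have h := congrArg (fun p => (derivative p).eval 0) (hq.comp_X_add_C n x)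
  simp only [derivative_comp, derivative_add, derivative_X, derivative_C, add_zero, eval_mul,
    eval_comp, eval_add, eval_X, eval_C, zero_add, one_mul, derivative_sum,
    derivative_C_mul, eval_finsetSum] at h
  rw [h, eval_finsetSum]
  exact sum_congr rfl fun k _ => by rw [eval_mul, eval_C, mul_comm]

theorem eq_of_derivative_eval_zero_eq [IsDomain R] [Infinite R] [IsAddTorsionFree R]
    {r : ℕ → R[X]} (hq : IsBinomialType q) (hr : IsBinomialType r)
    (hder : ∀ n, 0 < n → (derivative (q n)).eval 0 = (derivative (r n)).eval 0) (n : ℕ) :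
    q n = r n := by
  induction n using Nat.strong_induction_on with
  | _ n ih =>
    rcases Nat.eq_zero_or_pos n with rfl | hn
    · rw [hq.zero_eq_one, hr.zero_eq_one]
    have hd : derivative (q n - r n) = 0 := by
      rw [derivative_sub, sub_eq_zero, hq.derivative_eq_sum, hr.derivative_eq_sum]
      refine sum_congr rfl fun k hk => ?_
      rcases Nat.eq_zero_or_pos k with rfl | hk
      · simp only [hq.zero_eq_one, hr.zero_eq_one, derivative_one, eval_zero, map_zero, zero_mul]
      · rw [hder k hk, ih (n - k) (by omega)]
    rw [← sub_eq_zero, eq_C_of_derivative_eq_zero hd, coeff_zero_eq_eval_zero, eval_sub,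
      hq.eval_zero_of_pos hn, hr.eval_zero_of_pos hn, sub_self, map_zero]

end IsBinomialType

theorem token_determined_by_derivatives_general (q r : ℕ → Polynomial ℝ)
    (hq0 : q 0 = 1) (hr0 : r 0 = 1)
    (hqtoken : ∀ n (x y : ℝ), (q n).eval (x + y) =
      ∑ k ∈ range (n + 1), (q k).eval y * (q (n - k)).eval x)
    (hrtoken : ∀ n (x y : ℝ), (r n).eval (x + y) =
      ∑ k ∈ range (n + 1), (r k).eval y * (r (n - k)).eval x)
    (hder : ∀ n, 1 ≤ n →
      (derivative (q n)).eval 0 = (derivative (r n)).eval 0) :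
    ∀ n, q n = r n :=
  IsBinomialType.eq_of_derivative_eval_zero_eq ⟨hq0, hqtoken⟩ ⟨hr0, hrtoken⟩ hder

theorem token_determined_by_derivatives (q r : ℕ → Polynomial ℝ)
    (hqdeg : ∀ n, (q n).degree = n) (hrdeg : ∀ n, (r n).degree = n)
    (hq0 : q 0 = 1) (hr0 : r 0 = 1)
    (hqtoken : ∀ n (x y : ℝ), (q n).eval (x + y) =
      ∑ k ∈ range (n + 1), (q k).eval y * (q (n - k)).eval x)
    (hrtoken : ∀ n (x y : ℝ), (r n).eval (x + y) =
      ∑ k ∈ range (n + 1), (r k).eval y * (r (n - k)).eval x)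
    (hder : ∀ n, 1 ≤ n →
      (derivative (q n)).eval 0 = (derivative (r n)).eval 0) :
    ∀ n, q n = r n :=
  token_determined_by_derivatives_general q r hq0 hr0 hqtoken hrtoken hder
end

section
/- The Abel polynomials p_n(x) = x(x − na)^{n−1} (with p_0 = 1), for a fixed parameter a, form a polynomial sequence of binomial type: p_n(x+y) = Σ_{k=0}^n C(n,k) p_k(x) p_{n-k}(y). -/
open Finset

/-- The Abel polynomials `p₀ = 1`, `pₙ(x) = x (x - n a)^(n-1)`. -/
noncomputable def abelPoly (a : ℝ) (n : ℕ) (x : ℝ) : ℝ :=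
  if n = 0 then 1 else x * (x - n * a) ^ (n - 1)

/-!
The derivative of `pₙ` is `n pₙ₋₁(x - a)`, i.e. `(pₙ)` is the basic sequence of the delta
operator `f ↦ f'(· + a)`. By induction on `n`, both sides of the identity, viewed as functions
of `x`, then have the same derivative `(n + 1) pₙ(x - a + y)`, and they agree at `x = 0`
because `pₖ(0) = 0` for `k ≥ 1`.
-/

theorem eq_of_hasDerivAt_eq {𝕜 G : Type*} [NontriviallyNormedField 𝕜] [IsRCLikeNormedField 𝕜]
    [NormedAddCommGroup G] [NormedSpace 𝕜 G] {f g f' : 𝕜 → G}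
    (hf : ∀ x, HasDerivAt f (f' x) x) (hg : ∀ x, HasDerivAt g (f' x) x) (x₀ : 𝕜)
    (hfg : f x₀ = g x₀) : f = g :=
  eq_of_fderiv_eq (fun x => (hf x).differentiableAt) (fun x => (hg x).differentiableAt)
    (fun x => by rw [(hf x).hasFDerivAt.fderiv, (hg x).hasFDerivAt.fderiv]) x₀ hfg

namespace abelPoly

variable (a : ℝ)

@[simp]
theorem zero (x : ℝ) : abelPoly a 0 x = 1 := rfl

theorem succ (n : ℕ) (x : ℝ) : abelPoly a (n + 1) x = x * (x - (n + 1) * a) ^ n := by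
  simp [abelPoly]

@[simp]
theorem succ_apply_zero (n : ℕ) : abelPoly a (n + 1) 0 = 0 := by
  simp [succ]

theorem hasDerivAt (n : ℕ) (x : ℝ) :
    HasDerivAt (abelPoly a n) (n * abelPoly a (n - 1) (x - a)) x := by
  rcases n with _ | n
  · exact (hasDerivAt_const x (1 : ℝ)).congr_deriv (by simp)
  · rw [funext (succ a n)]
    refine ((hasDerivAt_id' x).mul (((hasDerivAt_id' x).sub_const _).fun_pow n)).congr_deriv ?_
    rcases n with _ | n
    · simp
    · simp only [Nat.add_sub_cancel, succ, Nat.cast_add, Nat.cast_one]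
      ring

theorem hasDerivAt_binomial_sum (n : ℕ) (x y : ℝ) :
    HasDerivAt (fun x => ∑ k ∈ range (n + 2),
        ((n + 1).choose k : ℝ) * abelPoly a k x * abelPoly a (n + 1 - k) y)
      ((n + 1) * ∑ k ∈ range (n + 1),
        (n.choose k : ℝ) * abelPoly a k (x - a) * abelPoly a (n - k) y) x := by
  refine (HasDerivAt.fun_sum fun k _ => ((hasDerivAt a k x).const_mul
    ((n + 1).choose k : ℝ)).mul_const (abelPoly a (n + 1 - k) y)).congr_deriv ?_
  rw [sum_range_succ', Nat.cast_zero, zero_mul, mul_zero, zero_mul, add_zero, mul_sum]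
  refine sum_congr rfl fun k _ => ?_
  have hchoose : ((n + 1 : ℕ) * n.choose k : ℝ) = (n + 1).choose (k + 1) * (k + 1 : ℕ) := by
    exact_mod_cast Nat.add_one_mul_choose_eq n k
  rw [Nat.add_sub_cancel, Nat.add_sub_add_right]
  push_cast at hchoose ⊢
  linear_combination -abelPoly a k (x - a) * abelPoly a (n - k) y * hchoose

end abelPoly

theorem abel_binomial_type (a : ℝ) :
    ∀ (n : ℕ) (x y : ℝ), abelPoly a n (x + y) =
      ∑ k ∈ range (n + 1), (n.choose k : ℝ) * abelPoly a k x * abelPoly a (n - k) y := by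
  intro n
  induction n with
  | zero => simp
  | succ n ih =>
    intro x y
    suffices (fun x => abelPoly a (n + 1) (x + y)) = fun x => ∑ k ∈ range (n + 2),
        ((n + 1).choose k : ℝ) * abelPoly a k x * abelPoly a (n + 1 - k) y from congrFun this x
    refine eq_of_hasDerivAt_eq (f' := fun x => (n + 1) * abelPoly a n (x - a + y))
      (fun x => ?_) (fun x => ?_) 0 ?_
    · have h := (abelPoly.hasDerivAt a (n + 1) (x + y)).comp_add_const x y
      rwa [Nat.add_sub_cancel, ← sub_add_eq_add_sub, Nat.cast_succ] at h
    · simpa only [← ih] using abelPoly.hasDerivAt_binomial_sum a n x y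
    · simp [sum_range_succ']
end
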